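/- (Dyment's theorem for the Muchnik lattice.) Let A and B be mass problems with A <_w B. Then there is no mass problem C with A <_w C <_w B if and only if there exists f ∈ ω^ω such that A ≡_w B ∪ {f}, ¬(B ≤_w {f}), and B ≤_w C'(f), where C'(f) = {g ∈ ω^ω : f <_T g}. -/
import Mathlib


open Cardinal

namespace Muchnik

/-- Oracle partial recursiveness: `f` is partial recursive relative to the oracle `g`. -/
inductive RecursiveIn (g : ℕ → ℕ) : (ℕ →. ℕ) → Prop
  | oracle : RecursiveIn g ↑g
  | zero : RecursiveIn g (pure 0)
  | succ : RecursiveIn g ↑Nat.succ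
  | left : RecursiveIn g ↑fun n : ℕ => n.unpair.1
  | right : RecursiveIn g ↑fun n : ℕ => n.unpair.2
  | pair {f h} : RecursiveIn g f → RecursiveIn g h →
      RecursiveIn g fun n => Nat.pair <$> f n <*> h n
  | comp {f h} : RecursiveIn g f → RecursiveIn g h →
      RecursiveIn g fun n => h n >>= f
  | prec {f h} : RecursiveIn g f → RecursiveIn g h →
      RecursiveIn g (Nat.unpaired fun a n =>
        n.rec (f a) fun y IH => do let i ← IH; h (Nat.pair a (Nat.pair y i)))
  | rfind {f} : RecursiveIn g f →
      RecursiveIn g fun a => Nat.rfind fun n => (fun m => m = 0) <$> f (Nat.pair a n)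

/-- Turing reducibility `f ≤_T g` for elements of Baire space. -/
def TuringLe (f g : ℕ → ℕ) : Prop := RecursiveIn g ↑f

/-- Strict Turing reducibility `f <_T g`. -/
def TuringLt (f g : ℕ → ℕ) : Prop := TuringLe f g ∧ ¬ TuringLe g f

/-- Turing equivalence `f ≡_T g`. -/
def TuringEquiv (f g : ℕ → ℕ) : Prop := TuringLe f g ∧ TuringLe g f

/-- Turing incomparability `f |_T g`. -/
def TuringIncomp (f g : ℕ → ℕ) : Prop := ¬ TuringLe f g ∧ ¬ TuringLe g f

/-- Muchnik reducibility `A ≤_w B` between mass problems. -/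
def MuchnikLe (A B : Set (ℕ → ℕ)) : Prop := ∀ f ∈ B, ∃ g ∈ A, TuringLe g f

/-- Strict Muchnik reducibility `A <_w B`. -/
def MuchnikLt (A B : Set (ℕ → ℕ)) : Prop := MuchnikLe A B ∧ ¬ MuchnikLe B A

/-- Muchnik equivalence `A ≡_w B`. -/
def MuchnikEquiv (A B : Set (ℕ → ℕ)) : Prop := MuchnikLe A B ∧ MuchnikLe B A

/-- The strict Turing upper cone `C'(f) = {g : f <_T g}`. -/
def cone (f : ℕ → ℕ) : Set (ℕ → ℕ) := {g | TuringLt f g}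

/-- The recursive join `f ⊕ g`: `(f ⊕ g)(2x) = f(x)` and `(f ⊕ g)(2x+1) = g(x)`. -/
def join (f g : ℕ → ℕ) : ℕ → ℕ := fun n => if n % 2 = 0 then f (n / 2) else g (n / 2)

/-- The join `A + B` of mass problems. -/
def joinSet (A B : Set (ℕ → ℕ)) : Set (ℕ → ℕ) := {h | ∃ f ∈ A, ∃ g ∈ B, h = join f g}

/-- Identification of `2^ω` with a subset of Baire space. -/
def ofBool (X : ℕ → Bool) : ℕ → ℕ := fun n => if X n then 1 else 0



lemma recursiveIn_trans {g h : ℕ → ℕ} (hg : RecursiveIn h ↑g) :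
    ∀ {p : ℕ →. ℕ}, RecursiveIn g p → RecursiveIn h p := by
  intro p hp
  induction hp with
  | oracle => exact hg
  | zero => exact .zero
  | succ => exact .succ
  | left => exact .left
  | right => exact .right
  | pair _ _ ih1 ih2 => exact .pair ih1 ih2
  | comp _ _ ih1 ih2 => exact .comp ih1 ih2
  | prec _ _ ih1 ih2 => exact .prec ih1 ih2
  | rfind _ ih => exact .rfind ih

lemma TuringLe.refl (f : ℕ → ℕ) : TuringLe f f := RecursiveIn.oracle

lemma TuringLe.trans {f g h : ℕ → ℕ} (h1 : TuringLe f g) (h2 : TuringLe g h) :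
    TuringLe f h := recursiveIn_trans h2 h1

lemma MuchnikLe.trans {A B C : Set (ℕ → ℕ)} (h1 : MuchnikLe A B) (h2 : MuchnikLe B C) :
    MuchnikLe A C := by
  intro c hc
  obtain ⟨b, hb, hbc⟩ := h2 c hc
  obtain ⟨a, ha, hab⟩ := h1 b hb
  exact ⟨a, ha, hab.trans hbc⟩

/-- (Dyment's theorem for the Muchnik lattice.) For mass problems `A <_w B`, the open
interval `(A, B)` is empty if and only if there is `f` with `A ≡_w B ∪ {f}`,
`¬(B ≤_w {f})`, and `B ≤_w C'(f)`, where `C'(f)` is the strict Turing upper cone of `f`. -/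
theorem dyment_muchnik (A B : Set (ℕ → ℕ)) (hAB : MuchnikLt A B) :
    (¬ ∃ C : Set (ℕ → ℕ), MuchnikLt A C ∧ MuchnikLt C B) ↔
      ∃ f : ℕ → ℕ, MuchnikEquiv A (B ∪ {f}) ∧ ¬ MuchnikLe B {f} ∧ MuchnikLe B (cone f) := by

  obtain ⟨hABle, hBA⟩ := hAB
  constructor
  · -- forward direction
    intro hempty
    -- choose f ∈ A with no element of B below it
    have : ∃ f ∈ A, ¬ ∃ b ∈ B, TuringLe b f := by
      by_contra hc
      push_neg at hc
      exact hBA fun a ha => hc a ha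
    obtain ⟨f, hfA, hfB⟩ := this
    push_neg at hfB
    refine ⟨f, ?_, ?_, ?_⟩
    · -- A ≡ B ∪ {f}
      set C₁ : Set (ℕ → ℕ) := B ∪ {g | TuringLe f g} with hC₁
      have hC₁B : MuchnikLe C₁ B := fun b hb => ⟨b, Or.inl hb, TuringLe.refl b⟩
      have hfC₁ : f ∈ C₁ := Or.inr (TuringLe.refl f)
      have hnBC₁ : ¬ MuchnikLe B C₁ := by
        intro h
        obtain ⟨b, hb, hbf⟩ := h f hfC₁
        exact hfB b hb hbf
      have hAC₁ : MuchnikLe A C₁ := by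
        rintro g (hg | hg)
        · exact hABle g hg
        · exact ⟨f, hfA, hg⟩
      have hC₁A : MuchnikLe C₁ A := by
        by_contra hn
        exact hempty ⟨C₁, ⟨hAC₁, hn⟩, ⟨hC₁B, hnBC₁⟩⟩
      have hBfC₁ : MuchnikLe (B ∪ {f}) C₁ := by
        rintro g (hg | hg)
        · exact ⟨g, Or.inl hg, TuringLe.refl g⟩
        · exact ⟨f, Or.inr rfl, hg⟩
      have hC₁Bf : MuchnikLe C₁ (B ∪ {f}) := by
        rintro g (hg | hg)
        · exact ⟨g, Or.inl hg, TuringLe.refl g⟩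
        · cases hg
          exact ⟨f, hfC₁, TuringLe.refl f⟩
      exact ⟨hAC₁.trans hC₁Bf, hBfC₁.trans hC₁A⟩
    · -- ¬ B ≤ {f}
      intro h
      obtain ⟨b, hb, hbf⟩ := h f rfl
      exact hfB b hb hbf
    · -- B ≤ cone f
      intro g hg
      obtain ⟨hfg, hgf⟩ := hg
      by_contra hc
      push_neg at hc
      set C₂ : Set (ℕ → ℕ) := B ∪ {h | TuringLe g h} with hC₂
      have hC₂B : MuchnikLe C₂ B := fun b hb => ⟨b, Or.inl hb, TuringLe.refl b⟩
      have hgC₂ : g ∈ C₂ := Or.inr (TuringLe.refl g)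
      have hnBC₂ : ¬ MuchnikLe B C₂ := by
        intro h
        obtain ⟨b, hb, hbg⟩ := h g hgC₂
        exact hc b hb hbg
      have hAC₂ : MuchnikLe A C₂ := by
        rintro h (hh | hh)
        · exact hABle h hh
        · exact ⟨f, hfA, hfg.trans hh⟩
      have hC₂A : MuchnikLe C₂ A := by
        by_contra hn
        exact hempty ⟨C₂, ⟨hAC₂, hn⟩, ⟨hC₂B, hnBC₂⟩⟩
      obtain ⟨h, hh, hhf⟩ := hC₂A f hfA
      rcases hh with hh | hh
      · exact hfB h hh hhf
      · exact hgf (hh.trans hhf)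
  · -- backward direction
    rintro ⟨f, ⟨hA1, hA2⟩, hBf, hBcone⟩ ⟨C, ⟨hAC, hCA⟩, hCB, hBC⟩
    -- find h₀ ∈ C with no element of B below it
    have : ∃ h₀ ∈ C, ¬ ∃ b ∈ B, TuringLe b h₀ := by
      by_contra hc
      push_neg at hc
      exact hBC fun c hc' => hc c hc'
    obtain ⟨h₀, hh₀C, hh₀B⟩ := this
    push_neg at hh₀B
    -- B ∪ {f} ≤ C
    have hBfC : MuchnikLe (B ∪ {f}) C := hA2.trans hAC
    obtain ⟨g, hg, hgh₀⟩ := hBfC h₀ hh₀C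
    rcases hg with hg | hg
    · exact hh₀B g hg hgh₀
    cases hg
    -- so f ≤ h₀; show h₀ ≤ f
    have hh₀f : TuringLe h₀ f := by
      by_contra hn
      obtain ⟨b, hb, hbh₀⟩ := hBcone h₀ ⟨hgh₀, hn⟩
      exact hh₀B b hb hbh₀
    -- show C ≤ A, contradiction
    apply hCA
    intro a ha
    obtain ⟨g', hg', hg'a⟩ := hA2 a ha
    rcases hg' with hg' | hg'
    · obtain ⟨c, hcC, hcg'⟩ := hCB g' hg'
      exact ⟨c, hcC, hcg'.trans hg'a⟩
    cases hg'
    by_cases haf : TuringLe a f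
    · exact ⟨h₀, hh₀C, hh₀f.trans hg'a⟩
    · obtain ⟨b, hb, hba⟩ := hBcone a ⟨hg'a, haf⟩
      obtain ⟨c, hcC, hcb⟩ := hCB b hb
      exact ⟨c, hcC, hcb.trans hba⟩


end Muchnik
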